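/- Suppose each objective f_i is M_i-relatively Lipschitz continuous and, when used at a productive step t, μ_t-relatively strongly convex w.r.t. h, and the constraint g is M_g-relatively Lipschitz continuous and μ_g-relatively strongly convex w.r.t. h; at each non-productive step t set μ_t = μ_g, and assume μ_{1:t} = Σ_{s=1}^t μ_s > 0 for all t. Set M = max of all the M_i and M_g. If the switching mirror-descent algorithm with step sizes η_t = 1/μ_{1:t} and threshold ε > 0 performs exactly T productive steps and T_J non-productive steps, and Regret_T ≥ 0, then Regret_T ≤ Σ_{t=1}^{T+T_J} M²/μ_{1:t} − ε·T_J, while g(x_t) ≤ ε at every productive step t. -/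

import Mathlib

open scoped RealInnerProductSpace
open Finset

/-- The Bregman divergence `V(y,x) = h(y) − h(x) − ⟨∇h(x), y − x⟩`. -/
noncomputable def breg {E : Type*} [NormedAddCommGroup E] [InnerProductSpace ℝ E]
    [CompleteSpace E] (h : E → ℝ) (y x : E) : ℝ :=
  h y - h x - ⟪gradient h x, y - x⟫

/-- `f` is `M`-relatively Lipschitz continuous w.r.t. the prox-function `h` on `Q`. -/
noncomputable def RelLipschitz {E : Type*} [NormedAddCommGroup E] [InnerProductSpace ℝ E]
    [CompleteSpace E] (h : E → ℝ) (Q : Set E) (M : ℝ) (f : E → ℝ) : Prop :=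
  ∀ x ∈ Q, ∀ y ∈ Q, 0 ≤ ⟪gradient f x, y - x⟫ + M * Real.sqrt (2 * breg h y x)

/-- `f` is `μ`-relatively strongly convex w.r.t. the prox-function `h` on `Q`. -/
noncomputable def RelStrongConvex {E : Type*} [NormedAddCommGroup E] [InnerProductSpace ℝ E]
    [CompleteSpace E] (h : E → ℝ) (Q : Set E) (μ : ℝ) (f : E → ℝ) : Prop :=
  ∀ x ∈ Q, ∀ y ∈ Q, f y + ⟪gradient f y, x - y⟫ + μ * breg h x y ≤ f x

/-- One mirror-descent step from `x` with step size `η` in the direction `v`: there is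
`y` with `∇h(y) = ∇h(x) − η·v`, and the next iterate `x'` is the Bregman projection of
`y` onto `Q`. -/
noncomputable def MDStepV {E : Type*} [NormedAddCommGroup E] [InnerProductSpace ℝ E]
    [CompleteSpace E] (h : E → ℝ) (Q : Set E) (η : ℝ) (v : E) (x x' : E) : Prop :=
  ∃ y : E, gradient h y = gradient h x - η • v ∧ x' ∈ Q ∧
    IsMinOn (fun z => breg h z y) Q x'


/-!
With `η_t = 1/μ_{1:t}`, one mirror step on `φ` from `x_t` gives, for every `u ∈ Q`,
`φ(x_t) - φ(u) ≤ M²/(2μ_{1:t}) + μ_{1:t-1} V(u, x_t) - μ_{1:t} V(u, x_{t+1})`.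
Indeed, split `η_t ⟪∇φ(x_t), x_t - u⟫` at `x_{t+1}`: the optimality condition of the Bregman
projection and the three-point identity bound the part `x_{t+1} - u`, relative Lipschitz
continuity and Young's inequality the part `x_t - x_{t+1}`, and relative strong convexity
bounds `⟪∇φ(x_t), x_t - u⟫` from below by `φ(x_t) - φ(u) + μ_t V(u, x_t)`.
Take `u = x*`. At a non-productive step `φ = g` and `g(x_t) - g(x*) > ε`, so such a step
contributes at least `ε`. Summing over all steps, the Bregman terms telescope and the last one
is nonnegative.
-/

section Bregman
variable {E : Type*} [NormedAddCommGroup E] [InnerProductSpace ℝ E] [CompleteSpace E]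
  {x x' y z u : E}

theorem ConvexOn.inner_gradient_le_sub {φ : E → ℝ} (hφc : ConvexOn ℝ Set.univ φ)
    (hφd : DifferentiableAt ℝ φ x) (y : E) :
    ⟪gradient φ x, y - x⟫ ≤ φ y - φ x := by
  set q : ℝ → ℝ := fun t => φ (x + t • (y - x))
  have hq : ConvexOn ℝ Set.univ q := by
    simpa [q, Function.comp_def, AffineMap.lineMap_apply, add_comm] using
      hφc.comp_affineMap (AffineMap.lineMap x y : ℝ →ᵃ[ℝ] E)
  have hline : HasDerivAt (fun t : ℝ => x + t • (y - x)) (y - x) 0 := by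
    simpa using ((hasDerivAt_id (0 : ℝ)).smul_const (y - x)).const_add x
  have hderiv : HasDerivAt q ⟪gradient φ x, y - x⟫ 0 := by
    rw [inner_gradient_left]
    exact (by simpa using hφd.hasFDerivAt : HasFDerivAt φ _ (x + (0 : ℝ) • (y - x)))
      |>.comp_hasDerivAt 0 hline
  simpa [slope, q] using
    hq.le_slope_of_hasDerivAt (Set.mem_univ 0) (Set.mem_univ 1) one_pos hderiv

variable {h : E → ℝ} {Q : Set E} {M M' : ℝ}

theorem breg_nonneg (hc : ConvexOn ℝ Set.univ h) (hd : DifferentiableAt ℝ h x) (y : E) :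
    0 ≤ breg h y x := by
  have := hc.inner_gradient_le_sub hd y
  rw [breg]
  linarith

theorem inner_gradient_sub_gradient_eq_breg (u x x' : E) :
    ⟪gradient h x - gradient h x', u - x'⟫ = breg h u x' + breg h x' x - breg h u x := by
  simp only [breg, inner_sub_left, inner_sub_right]
  ring

theorem hasFDerivAt_breg_left (hd : DifferentiableAt ℝ h z) (y : E) :
    HasFDerivAt (fun z => breg h z y) (fderiv ℝ h z - innerSL ℝ (gradient h y)) z := by
  have := (hd.hasFDerivAt.sub_const (h y)).sub
    ((innerSL ℝ (gradient h y)).hasFDerivAt.comp z ((hasFDerivAt_id z).sub_const y))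
  rwa [ContinuousLinearMap.comp_id] at this

theorem inner_gradient_sub_nonneg_of_isMinOn_breg (hQ : Convex ℝ Q)
    (hd : DifferentiableAt ℝ h x') (hx' : x' ∈ Q) (hmin : IsMinOn (fun z => breg h z y) Q x')
    (hu : u ∈ Q) : 0 ≤ ⟪gradient h x' - gradient h y, u - x'⟫ := by
  have := hmin.localize.hasFDerivWithinAt_nonneg (hasFDerivAt_breg_left hd y).hasFDerivWithinAt
    (sub_mem_posTangentConeAt_of_segment_subset (hQ.segment_subset hx' hu))
  simpa [inner_sub_left, inner_gradient_left] using this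

theorem RelLipschitz.mono {f : E → ℝ} (hf : RelLipschitz h Q M f) (hM : M ≤ M') :
    RelLipschitz h Q M' f := fun x hx y hy =>
  (hf x hx y hy).trans (by gcongr)

variable {η A μ : ℝ} {v : E} {φ : E → ℝ}

theorem MDStepV.mem (hstep : MDStepV h Q η v x x') : x' ∈ Q :=
  hstep.choose_spec.2.1

theorem MDStepV.inner_le_breg_sub (hQ : Convex ℝ Q) (hd : Differentiable ℝ h)
    (hc : ConvexOn ℝ Set.univ h) (hη : 0 ≤ η) (hstep : MDStepV h Q η v x x') (hu : u ∈ Q)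
    (hv : 0 ≤ ⟪v, x' - x⟫ + M * Real.sqrt (2 * breg h x' x)) :
    η * ⟪v, x - u⟫ ≤ η ^ 2 * M ^ 2 / 2 + breg h u x - breg h u x' := by
  obtain ⟨y, hy, hx', hmin⟩ := hstep
  have hproj := inner_gradient_sub_nonneg_of_isMinOn_breg hQ (hd x') hx' hmin hu
  have hthree := inner_gradient_sub_gradient_eq_breg (h := h) u x x'
  have hdual : η * ⟪v, u - x'⟫ =
      ⟪gradient h x - gradient h x', u - x'⟫ + ⟪gradient h x' - gradient h y, u - x'⟫ := by
    rw [← real_inner_smul_left, ← inner_add_left, hy]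
    congr 1
    abel
  set s := Real.sqrt (2 * breg h x' x)
  have hs : s ^ 2 = 2 * breg h x' x := Real.sq_sqrt (by linarith [breg_nonneg hc (hd x) x'])
  -- Young's inequality `η M s ≤ η² M² / 2 + s² / 2`
  have hyoung : η * ⟪v, x - x'⟫ ≤ η ^ 2 * M ^ 2 / 2 + breg h x' x := by
    have : ⟪v, x - x'⟫ ≤ M * s := by
      rw [← neg_sub, inner_neg_right]
      linarith
    nlinarith [mul_le_mul_of_nonneg_left this hη, sq_nonneg (η * M - s)]
  have hsplit : ⟪v, x - u⟫ = ⟪v, x - x'⟫ - ⟪v, u - x'⟫ := by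
    rw [← inner_sub_right, sub_sub_sub_cancel_right]
  rw [hsplit, mul_sub]
  linarith

theorem MDStepV.sub_le_of_relStrongConvex (hQ : Convex ℝ Q) (hd : Differentiable ℝ h)
    (hc : ConvexOn ℝ Set.univ h) (hA : 0 < A) (hx : x ∈ Q) (hu : u ∈ Q)
    (hLip : RelLipschitz h Q M φ) (hSC : RelStrongConvex h Q μ φ)
    (hstep : MDStepV h Q (1 / A) (gradient φ x) x x') :
    φ x - φ u ≤ M ^ 2 / (2 * A) + (A - μ) * breg h u x - A * breg h u x' := by
  have hstep' := hstep.inner_le_breg_sub hQ hd hc (by positivity) hu (hLip x hx x' hstep.mem)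
  have hsc := hSC u hu x hx
  rw [← neg_sub x u, inner_neg_right] at hsc
  have hdescent : ⟪gradient φ x, x - u⟫ ≤
      M ^ 2 / (2 * A) + A * breg h u x - A * breg h u x' := by
    calc ⟪gradient φ x, x - u⟫ = A * (1 / A * ⟪gradient φ x, x - u⟫) := by field_simp
      _ ≤ A * ((1 / A) ^ 2 * M ^ 2 / 2 + breg h u x - breg h u x') := by gcongr
      _ = _ := by field_simp
  linarith

end Bregman

theorem sum_Icc_add_partialSum_telescope (N : ℕ) (μ c D : ℕ → ℝ) :
    ∑ t ∈ Icc 1 N, (c t + (∑ s ∈ Icc 1 t, μ s - μ t) * D t - (∑ s ∈ Icc 1 t, μ s) * D (t + 1))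
      = ∑ t ∈ Icc 1 N, c t - (∑ s ∈ Icc 1 N, μ s) * D (N + 1) := by
  induction N with
  | zero => simp
  | succ n ih =>
    rw [sum_Icc_succ_top (by omega), sum_Icc_succ_top (by omega), ih,
      sum_Icc_succ_top (by omega)]
    ring

theorem mem_of_succ_mem {α : Type*} {s : Set α} {x : ℕ → α} {N : ℕ} (hx1 : x 1 ∈ s)
    (hsucc : ∀ t ∈ Icc 1 N, x (t + 1) ∈ s) : ∀ t ∈ Icc 1 N, x t ∈ s := by
  rintro (_ | _ | t) ht
  · simp at ht
  · exact hx1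
  · exact hsucc (t + 1) (by simp only [mem_Icc] at ht ⊢; omega)

theorem sum_add_mul_le_sum_of_injective {ι α : Type*} [Fintype ι] [DecidableEq α]
    {σ : ι → α} (hσ : Function.Injective σ) {s : Finset α} (hσs : ∀ i, σ i ∈ s) {n : ℕ}
    (hcard : #s = Fintype.card ι + n) {a : ι → ℝ} {b : α → ℝ} {ε : ℝ}
    (ha : ∀ i, a i ≤ b (σ i)) (hb : ∀ t ∈ s, (¬ ∃ i, σ i = t) → ε ≤ b t) :
    ∑ i, a i + ε * n ≤ ∑ t ∈ s, b t := by
  set P := (univ : Finset ι).image σ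
  have hsub : P ⊆ s := by simpa [P, image_subset_iff] using hσs
  have hcompl : #(s \ P) = n := by
    rw [card_sdiff_of_subset hsub, card_image_of_injective _ hσ, hcard, card_univ]
    omega
  have hrest : ε * n ≤ ∑ t ∈ s \ P, b t := by
    have := card_nsmul_le_sum (s \ P) b ε fun t ht => by
      rw [mem_sdiff, mem_image] at ht
      exact hb t ht.1 fun ⟨i, hi⟩ => ht.2 ⟨i, mem_univ i, hi⟩
    rwa [hcompl, nsmul_eq_mul, mul_comm] at this
  rw [← sum_sdiff hsub, sum_image hσ.injOn]
  linarith [sum_le_sum fun i (_ : i ∈ univ) => ha i]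

theorem switching_mirror_descent_varying_mu_general
    {E : Type*} [NormedAddCommGroup E] [InnerProductSpace ℝ E] [FiniteDimensional ℝ E]
    (Q : Set E) (hQconv : Convex ℝ Q)
    (h : E → ℝ) (hdiff : Differentiable ℝ h) (hconv : ConvexOn ℝ Set.univ h)
    (T TJ : ℕ)
    (f : Fin T → E → ℝ) (g : E → ℝ)
    (Mi : Fin T → ℝ) (Mg μg : ℝ) (μ : ℕ → ℝ)
    (hfLip : ∀ i, RelLipschitz h Q (Mi i) (f i)) (hgLip : RelLipschitz h Q Mg g)
    (hgSC : RelStrongConvex h Q μg g)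
    (M ε : ℝ) (hM : M = max (⨆ i, Mi i) Mg)
    (hμpos : ∀ t ∈ Finset.Icc 1 (T + TJ), 0 < ∑ s ∈ Finset.Icc 1 t, μ s)
    -- the iterates and the run of the switching algorithm:
    (x : ℕ → E) (hx1 : x 1 ∈ Q)
    (σ : Fin T → ℕ) (hσmono : StrictMono σ)
    (hσrange : ∀ i, σ i ∈ Finset.Icc 1 (T + TJ))
    (hproductive : ∀ t ∈ Finset.Icc 1 (T + TJ), (g (x t) ≤ ε ↔ ∃ i, σ i = t))
    -- at the `i`-th productive step, `f i` is `μ_{σ i}`-relatively strongly convex: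
    (hfSC : ∀ i, RelStrongConvex h Q (μ (σ i)) (f i))
    -- at non-productive steps, `μ_t = μ_g`:
    (hμg : ∀ t ∈ Finset.Icc 1 (T + TJ), (¬ ∃ i, σ i = t) → μ t = μg)
    (hstepP : ∀ i : Fin T,
      MDStepV h Q (1 / ∑ s ∈ Finset.Icc 1 (σ i), μ s)
        (gradient (f i) (x (σ i))) (x (σ i)) (x (σ i + 1)))
    (hstepN : ∀ t ∈ Finset.Icc 1 (T + TJ), (¬ ∃ i, σ i = t) →
      MDStepV h Q (1 / ∑ s ∈ Finset.Icc 1 t, μ s)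
        (gradient g (x t)) (x t) (x (t + 1)))
    -- the constrained minimizer x*:
    (xs : E) (hxsQ : xs ∈ Q) (hxsg : g xs ≤ 0) :
    (∀ i, g (x (σ i)) ≤ ε) ∧
    ∑ i, f i (x (σ i)) - ∑ i, f i xs ≤
      (∑ t ∈ Finset.Icc 1 (T + TJ), M ^ 2 / ∑ s ∈ Finset.Icc 1 t, μ s) - ε * TJ := by
  set A : ℕ → ℝ := fun t => ∑ s ∈ Icc 1 t, μ s
  set b : ℕ → ℝ := fun t =>
    M ^ 2 / (2 * A t) + (A t - μ t) * breg h xs (x t) - A t * breg h xs (x (t + 1))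
  have hfM : ∀ i, RelLipschitz h Q M (f i) := fun i => (hfLip i).mono <|
    hM ▸ (le_ciSup (Set.finite_range Mi).bddAbove i).trans (le_max_left _ _)
  have hgM : RelLipschitz h Q M g := hgLip.mono (hM ▸ le_max_right _ _)
  have hxQ : ∀ t ∈ Icc 1 (T + TJ), x t ∈ Q := mem_of_succ_mem hx1 fun t ht => by
    by_cases hp : ∃ i, σ i = t
    exacts [hp.elim fun i hi => hi ▸ (hstepP i).mem, (hstepN t ht hp).mem]
  have hprod : ∀ i, f i (x (σ i)) - f i xs ≤ b (σ i) := fun i =>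
    (hstepP i).sub_le_of_relStrongConvex hQconv hdiff hconv (hμpos _ (hσrange i))
      (hxQ _ (hσrange i)) hxsQ (hfM i) (hfSC i)
  have hnonprod : ∀ t ∈ Icc 1 (T + TJ), (¬ ∃ i, σ i = t) → ε ≤ b t := by
    intro t ht hp
    have hgt : ε < g (x t) := lt_of_not_ge fun hle => hp ((hproductive t ht).1 hle)
    have := (hstepN t ht hp).sub_le_of_relStrongConvex hQconv hdiff hconv (hμpos t ht)
      (hxQ t ht) hxsQ hgM (hμg t ht hp ▸ hgSC)
    linarith
  have hlast : 0 ≤ A (T + TJ) * breg h xs (x (T + TJ + 1)) := by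
    refine mul_nonneg ?_ (breg_nonneg hconv (hdiff _) _)
    rcases Nat.eq_zero_or_pos (T + TJ) with h0 | hpos
    · simp [A, h0]
    · exact (hμpos _ (mem_Icc.2 ⟨hpos, le_rfl⟩)).le
  have hhalf : ∑ t ∈ Icc 1 (T + TJ), M ^ 2 / (2 * A t) ≤ ∑ t ∈ Icc 1 (T + TJ), M ^ 2 / A t :=
    sum_le_sum fun t ht => div_le_div_of_nonneg_left (sq_nonneg M) (hμpos t ht)
      (by linarith [hμpos t ht])
  refine ⟨fun i => (hproductive _ (hσrange i)).2 ⟨i, rfl⟩, ?_⟩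
  have hsum := sum_add_mul_le_sum_of_injective hσmono.injective hσrange (n := TJ) (by simp)
    hprod hnonprod
  rw [sum_Icc_add_partialSum_telescope] at hsum
  rw [← sum_sub_distrib]
  linarith

/-- Theorem 4 (Mirror Descent for constrained online optimization with step-dependent
relative strong convexity parameters): with `η_t = 1/μ_{1:t}` (where `μ_t = μ_g` at
non-productive steps) and threshold `ε > 0`, if the run makes exactly `T` productive steps
(the `i`-th at step index `σ i`, using objective `f i`) and `T_J` non-productive steps and
the regret is nonnegative, then `g(x_t) ≤ ε` at every productive step and
`Regret_T ≤ Σ_{t=1}^{T+T_J} M²/μ_{1:t} − ε·T_J`. -/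
theorem switching_mirror_descent_varying_mu
    {E : Type*} [NormedAddCommGroup E] [InnerProductSpace ℝ E] [FiniteDimensional ℝ E]
    (Q : Set E) (hQne : Q.Nonempty) (hQclosed : IsClosed Q) (hQconv : Convex ℝ Q)
    (h : E → ℝ) (hdiff : Differentiable ℝ h) (hconv : ConvexOn ℝ Set.univ h)
    (T TJ : ℕ) (hT : 0 < T)
    (f : Fin T → E → ℝ) (g : E → ℝ)
    (hfdiff : ∀ i, Differentiable ℝ (f i)) (hgdiff : Differentiable ℝ g)
    (hfconv : ∀ i, ConvexOn ℝ Set.univ (f i)) (hgconv : ConvexOn ℝ Set.univ g)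
    (Mi : Fin T → ℝ) (Mg μg : ℝ) (μ : ℕ → ℝ)
    (hfLip : ∀ i, RelLipschitz h Q (Mi i) (f i)) (hgLip : RelLipschitz h Q Mg g)
    (hgSC : RelStrongConvex h Q μg g)
    (M ε : ℝ) (hM : M = max (⨆ i, Mi i) Mg) (hε : 0 < ε)
    (hμpos : ∀ t ∈ Finset.Icc 1 (T + TJ), 0 < ∑ s ∈ Finset.Icc 1 t, μ s)
    -- the iterates and the run of the switching algorithm:
    (x : ℕ → E) (hx1 : x 1 ∈ Q)
    (σ : Fin T → ℕ) (hσmono : StrictMono σ)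
    (hσrange : ∀ i, σ i ∈ Finset.Icc 1 (T + TJ))
    (hproductive : ∀ t ∈ Finset.Icc 1 (T + TJ), (g (x t) ≤ ε ↔ ∃ i, σ i = t))
    -- at the `i`-th productive step, `f i` is `μ_{σ i}`-relatively strongly convex:
    (hfSC : ∀ i, RelStrongConvex h Q (μ (σ i)) (f i))
    -- at non-productive steps, `μ_t = μ_g`:
    (hμg : ∀ t ∈ Finset.Icc 1 (T + TJ), (¬ ∃ i, σ i = t) → μ t = μg)
    (hstepP : ∀ i : Fin T,
      MDStepV h Q (1 / ∑ s ∈ Finset.Icc 1 (σ i), μ s)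
        (gradient (f i) (x (σ i))) (x (σ i)) (x (σ i + 1)))
    (hstepN : ∀ t ∈ Finset.Icc 1 (T + TJ), (¬ ∃ i, σ i = t) →
      MDStepV h Q (1 / ∑ s ∈ Finset.Icc 1 t, μ s)
        (gradient g (x t)) (x t) (x (t + 1)))
    -- the constrained minimizer x*:
    (xs : E) (hxsQ : xs ∈ Q) (hxsg : g xs ≤ 0)
    (hxsmin : ∀ y ∈ Q, g y ≤ 0 → ∑ i, f i xs ≤ ∑ i, f i y)
    -- nonnegative regret:
    (hReg : 0 ≤ ∑ i, f i (x (σ i)) - ∑ i, f i xs) :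
    (∀ i, g (x (σ i)) ≤ ε) ∧
    ∑ i, f i (x (σ i)) - ∑ i, f i xs ≤
      (∑ t ∈ Finset.Icc 1 (T + TJ), M ^ 2 / ∑ s ∈ Finset.Icc 1 t, μ s) - ε * TJ :=
  switching_mirror_descent_varying_mu_general Q hQconv h hdiff hconv T TJ f g Mi Mg μg μ hfLip hgLip
    hgSC M ε hM hμpos x hx1 σ hσmono hσrange hproductive hfSC hμg hstepP hstepN xs hxsQ hxsg
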